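/- Let n be a positive integer, τ > 0, T > 0, let A, B : ℝ → (ℝⁿ →L ℝⁿ) be continuous maps into the continuous linear endomorphisms of ℝⁿ, and let ψ : [−τ, 0] → ℝⁿ be continuous. For a continuous z : [0, T] → ℝⁿ, define V(ψ, z) : [−τ, T] → ℝⁿ by V(ψ, z)(t) = ψ(t) for t ∈ [−τ, 0] and V(ψ, z)(t) = ψ(0) + ∫₀ᵗ z(σ) dσ for t ∈ [0, T]. Then there exists a unique continuous z* : [0, T] → ℝⁿ satisfying the fixed point equation z*(t) = A(t)·V(ψ, z*)(t) + B(t)·V(ψ, z*)(t − τ) for all t ∈ [0, T]; moreover y := V(ψ, z*) is the unique continuous solution of the integrated initial value problem (y = ψ on [−τ, 0] and y(t) = ψ(0) + ∫₀ᵗ (A(s)y(s) + B(s)y(s − τ)) ds for t ∈ [0, T]), and z*(t) is the derivative of y at every t ∈ (0, T). -/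

import Mathlib

open Set

/-- The operator `V` constructing from an initial function `ψ` on `[-τ, 0]` and a
prescribed derivative `z` on `[0, T]` the function equal to `ψ` for `t ≤ 0` and to
`ψ 0 + ∫₀ᵗ z` for `t ≥ 0`. -/
noncomputable def Vop (n : ℕ) (ψ z : ℝ → Fin n → ℝ) : ℝ → Fin n → ℝ :=
  fun t => if t ≤ 0 then ψ t else ψ 0 + ∫ σ in (0:ℝ)..t, z σ

/-!
On `C([0, T], ℝⁿ)` the map `z ↦ A·V(ψ, z) + B·V(ψ, z)(· - τ)` is of Volterra type:
`V(ψ, z₁) - V(ψ, z₂)` is the primitive of `z₁ - z₂`, and the delayed argument `t - τ` lies below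
`t`. Hence its `k`-th iterate is Lipschitz with constant `(M T)ᵏ / k!`, where `M` bounds
`‖A‖ + ‖B‖` on `[0, T]`, so some iterate is a contraction and the map has a unique fixed point `z*`.
A continuous solution `y` of the integrated problem equals `V(ψ, A y + B y(· - τ))`, so its
right-hand side is a fixed point too, which gives uniqueness of `y`; the derivative of `V(ψ, z*)`
is the fundamental theorem of calculus.
-/

open Filter Topology MeasureTheory Function
open scoped Nat

theorem existsUnique_isFixedPt_of_dist_iterate_le {X : Type*} [MetricSpace X] [CompleteSpace X]
    [Nonempty X] {f : X → X} {C : ℝ} (hC : 0 ≤ C)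
    (hf : ∀ (k : ℕ) (x y : X), dist (f^[k] x) (f^[k] y) ≤ C ^ k / k ! * dist x y) :
    ∃! x, IsFixedPt f x := by
  obtain ⟨k, hk⟩ := (FloorSemiring.tendsto_pow_div_factorial_atTop C).eventually
    (gt_mem_nhds zero_lt_one) |>.exists
  have hcontr : ContractingWith ⟨C ^ k / k !, by positivity⟩ f^[k] :=
    ⟨hk, LipschitzWith.of_dist_le_mul (hf k)⟩
  exact ⟨_, hcontr.isFixedPt_fixedPoint_iterate,
    fun x hx => hcontr.fixedPoint_unique (hx.iterate k)⟩

section Vop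

variable {n : ℕ} {ψ ψ₁ ψ₂ z z₁ z₂ : ℝ → Fin n → ℝ}

lemma Vop_of_nonpos {t : ℝ} (ht : t ≤ 0) : Vop n ψ z t = ψ t := if_pos ht

lemma Vop_of_nonneg {t : ℝ} (ht : 0 ≤ t) : Vop n ψ z t = ψ 0 + ∫ σ in (0:ℝ)..t, z σ := by
  rcases ht.eq_or_lt with rfl | ht
  · simp [Vop]
  · exact if_neg ht.not_ge

lemma Vop_eqOn {a b : ℝ} (ha : a ≤ 0) (hψ : EqOn ψ₁ ψ₂ (Icc a 0)) (hz : EqOn z₁ z₂ (Icc 0 b)) :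
    EqOn (Vop n ψ₁ z₁) (Vop n ψ₂ z₂) (Icc a b) := by
  intro t ht
  rcases le_total t 0 with h | h
  · rw [Vop_of_nonpos h, Vop_of_nonpos h]
    exact hψ ⟨ht.1, h⟩
  · rw [Vop_of_nonneg h, Vop_of_nonneg h, hψ ⟨ha, le_rfl⟩]
    congr 1
    refine intervalIntegral.integral_congr fun σ hσ => hz ?_
    rw [uIcc_of_le h] at hσ
    exact ⟨hσ.1, hσ.2.trans ht.2⟩

lemma continuousOn_Vop {a b : ℝ} (hψ : ContinuousOn ψ (Icc a 0))
    (hz : ContinuousOn z (Icc 0 b)) : ContinuousOn (Vop n ψ z) (Icc a b) := by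
  refine ContinuousOn.if ?_ ?_ ?_
  · intro t ht
    have ht0 : t = 0 := by simpa [Iic_def] using ht.2
    simp [ht0]
  · refine hψ.mono fun t ht => ⟨ht.1.1, ?_⟩
    simpa [Iic_def] using ht.2
  · rcases le_or_gt 0 b with hb | hb
    · have hprim := intervalIntegral.continuousOn_primitive_interval'
        (hz.intervalIntegrable_of_Icc (μ := volume) hb) left_mem_uIcc
      rw [uIcc_of_le hb] at hprim
      refine (continuousOn_const.add hprim).mono fun t ht => ⟨?_, ht.1.2⟩
      simpa [Ioi_def] using ht.2
    · refine fun t ht => absurd (ht.1.2.trans_lt hb) (not_lt.2 ?_)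
      simpa [Ioi_def] using ht.2

lemma hasDerivAt_Vop {b t : ℝ} (hz : ContinuousOn z (Icc 0 b)) (ht : t ∈ Ioo 0 b) :
    HasDerivAt (Vop n ψ z) (z t) t := by
  have hVop : Vop n ψ z =ᶠ[𝓝 t] fun s => ψ 0 + ∫ σ in (0:ℝ)..s, z σ := by
    filter_upwards [Ioi_mem_nhds ht.1] with s hs using Vop_of_nonneg (le_of_lt hs)
  refine HasDerivAt.congr_of_eventuallyEq ?_ hVop
  refine (intervalIntegral.integral_hasDerivAt_right ?_ ?_ ?_).const_add (ψ 0)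
  · exact (hz.mono (Icc_subset_Icc_right ht.2.le)).intervalIntegrable_of_Icc ht.1.le
  · exact (hz.mono Ioo_subset_Icc_self).stronglyMeasurableAtFilter isOpen_Ioo t ht
  · exact hz.continuousAt (Icc_mem_nhds ht.1 ht.2)

lemma norm_Vop_sub_le (hz₁ : Continuous z₁) (hz₂ : Continuous z₂) {c s t : ℝ} {k : ℕ}
    (hc : 0 ≤ c) (hst : s ≤ t) (ht : 0 ≤ t)
    (hbound : ∀ σ ∈ Icc 0 t, ‖z₁ σ - z₂ σ‖ ≤ c * σ ^ k) :
    ‖Vop n ψ z₁ s - Vop n ψ z₂ s‖ ≤ c * t ^ (k + 1) / (k + 1) := by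
  rcases le_or_gt s 0 with hs | hs
  · rw [Vop_of_nonpos hs, Vop_of_nonpos hs, sub_self, norm_zero]
    positivity
  rw [Vop_of_nonneg hs.le, Vop_of_nonneg hs.le, add_sub_add_left_eq_sub,
    ← intervalIntegral.integral_sub (hz₁.intervalIntegrable _ _) (hz₂.intervalIntegrable _ _)]
  calc ‖∫ σ in (0:ℝ)..s, (z₁ σ - z₂ σ)‖
      ≤ ∫ σ in (0:ℝ)..s, c * σ ^ k := by
        refine intervalIntegral.norm_integral_le_of_norm_le hs.le
          (ae_of_all _ fun σ hσ => hbound σ ⟨hσ.1.le, hσ.2.trans hst⟩) ?_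
        exact (continuous_const.mul (continuous_pow k)).intervalIntegrable _ _
    _ = c * s ^ (k + 1) / (k + 1) := by
        rw [intervalIntegral.integral_const_mul, integral_pow]
        ring
    _ ≤ c * t ^ (k + 1) / (k + 1) := by gcongr

end Vop

section DelayField

variable {E : Type*} [NormedAddCommGroup E] [NormedSpace ℝ E]
  {A B : ℝ → E →L[ℝ] E} {τ T : ℝ} {y y₁ y₂ : ℝ → E}

noncomputable def delayField (A B : ℝ → E →L[ℝ] E) (τ : ℝ) (y : ℝ → E) (t : ℝ) : E :=
  A t (y t) + B t (y (t - τ))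

lemma continuousOn_delayField (hτ : 0 ≤ τ) (hA : ContinuousOn A (Icc 0 T))
    (hB : ContinuousOn B (Icc 0 T)) (hy : ContinuousOn y (Icc (-τ) T)) :
    ContinuousOn (delayField A B τ y) (Icc 0 T) := by
  refine (hA.clm_apply (hy.mono ?_)).add (hB.clm_apply (hy.comp (by fun_prop) ?_))
  · exact Icc_subset_Icc (by linarith) le_rfl
  · exact fun t ht => ⟨by linarith [ht.1], by linarith [ht.2]⟩

lemma eqOn_delayField (hτ : 0 ≤ τ) (h : EqOn y₁ y₂ (Icc (-τ) T)) :
    EqOn (delayField A B τ y₁) (delayField A B τ y₂) (Icc 0 T) := by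
  intro t ht
  simp only [delayField]
  rw [h ⟨by linarith [ht.1], ht.2⟩, h ⟨by linarith [ht.1], by linarith [ht.2]⟩]

lemma norm_delayField_sub_le {t δ : ℝ} (h : ‖y₁ t - y₂ t‖ ≤ δ)
    (h_delay : ‖y₁ (t - τ) - y₂ (t - τ)‖ ≤ δ) :
    ‖delayField A B τ y₁ t - delayField A B τ y₂ t‖ ≤ (‖A t‖ + ‖B t‖) * δ := by
  calc ‖delayField A B τ y₁ t - delayField A B τ y₂ t‖
      = ‖A t (y₁ t - y₂ t) + B t (y₁ (t - τ) - y₂ (t - τ))‖ := by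
        simp only [delayField, map_sub]
        abel_nf
    _ ≤ ‖A t‖ * ‖y₁ t - y₂ t‖ + ‖B t‖ * ‖y₁ (t - τ) - y₂ (t - τ)‖ :=
        (norm_add_le _ _).trans (add_le_add ((A t).le_opNorm _) ((B t).le_opNorm _))
    _ ≤ (‖A t‖ + ‖B t‖) * δ := by
        rw [add_mul]
        gcongr

end DelayField

section Picard

variable {n : ℕ} {τ T : ℝ} {A B : ℝ → (Fin n → ℝ) →L[ℝ] (Fin n → ℝ)} {ψ : ℝ → Fin n → ℝ}
  (hτ : 0 ≤ τ) (hT : 0 ≤ T) (hA : ContinuousOn A (Icc 0 T)) (hB : ContinuousOn B (Icc 0 T))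
  (hψ : ContinuousOn ψ (Icc (-τ) 0))

noncomputable def delayPicard (u : C(Icc 0 T, Fin n → ℝ)) : C(Icc 0 T, Fin n → ℝ) :=
  ⟨(Icc 0 T).domRestrict (delayField A B τ (Vop n ψ (IccExtend hT u))),
    (continuousOn_delayField hτ hA hB
      (continuousOn_Vop hψ u.continuous.Icc_extend'.continuousOn)).domRestrict⟩

lemma delayPicard_apply (u : C(Icc 0 T, Fin n → ℝ)) (t : Icc 0 T) :
    delayPicard hτ hT hA hB hψ u t = delayField A B τ (Vop n ψ (IccExtend hT u)) t :=
  rfl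

lemma norm_delayPicard_iterate_sub_le {M : ℝ} (hM0 : 0 ≤ M)
    (hM : ∀ t ∈ Icc 0 T, ‖A t‖ + ‖B t‖ ≤ M) (u v : C(Icc 0 T, Fin n → ℝ)) (k : ℕ)
    (t : Icc 0 T) :
    ‖(delayPicard hτ hT hA hB hψ)^[k] u t - (delayPicard hτ hT hA hB hψ)^[k] v t‖ ≤
      (M * t) ^ k / k ! * dist u v := by
  induction k generalizing t with
  | zero => simpa [dist_eq_norm] using ContinuousMap.dist_apply_le_dist (f := u) (g := v) t
  | succ k ih =>
    set u' := (delayPicard hτ hT hA hB hψ)^[k] u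
    set v' := (delayPicard hτ hT hA hB hψ)^[k] v
    set c := M ^ k / k ! * dist u v
    have hc : 0 ≤ c := by positivity
    have hext : ∀ σ ∈ Icc 0 (t : ℝ),
        ‖IccExtend hT u' σ - IccExtend hT v' σ‖ ≤ c * σ ^ k := by
      intro σ hσ
      have hσT : σ ∈ Icc 0 T := ⟨hσ.1, hσ.2.trans t.2.2⟩
      rw [IccExtend_of_mem hT u' hσT, IccExtend_of_mem hT v' hσT]
      calc _ ≤ (M * σ) ^ k / k ! * dist u v := ih ⟨σ, hσT⟩
        _ = c * σ ^ k := by rw [mul_pow]; ring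
    have hVop : ∀ s ≤ (t : ℝ), ‖Vop n ψ (IccExtend hT u') s - Vop n ψ (IccExtend hT v') s‖ ≤
        c * t ^ (k + 1) / (k + 1) := fun s hs =>
      norm_Vop_sub_le u'.continuous.Icc_extend' v'.continuous.Icc_extend' hc hs t.2.1 hext
    rw [iterate_succ_apply', iterate_succ_apply', delayPicard_apply, delayPicard_apply]
    calc _ ≤ (‖A t‖ + ‖B t‖) * (c * t ^ (k + 1) / (k + 1)) :=
          norm_delayField_sub_le (hVop _ le_rfl) (hVop _ (by linarith))
      _ ≤ M * (c * t ^ (k + 1) / (k + 1)) := by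
          have := t.2.1
          gcongr
          exact hM t t.2
      _ = (M * t) ^ (k + 1) / (k + 1)! * dist u v := by
          simp only [c, Nat.factorial_succ, Nat.cast_mul, Nat.cast_succ]
          field_simp
          ring

lemma dist_delayPicard_iterate_le {M : ℝ} (hM0 : 0 ≤ M)
    (hM : ∀ t ∈ Icc 0 T, ‖A t‖ + ‖B t‖ ≤ M) (k : ℕ) (u v : C(Icc 0 T, Fin n → ℝ)) :
    dist ((delayPicard hτ hT hA hB hψ)^[k] u) ((delayPicard hτ hT hA hB hψ)^[k] v) ≤
      (M * T) ^ k / k ! * dist u v := by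
  refine (ContinuousMap.dist_le (by positivity)).2 fun t => ?_
  rw [dist_eq_norm]
  refine (norm_delayPicard_iterate_sub_le hτ hT hA hB hψ hM0 hM u v k t).trans ?_
  have := t.2.1
  gcongr
  exact t.2.2

lemma existsUnique_isFixedPt_delayPicard : ∃! u, IsFixedPt (delayPicard hτ hT hA hB hψ) u := by
  obtain ⟨C, hC⟩ := isCompact_Icc.exists_bound_of_continuousOn (hA.norm.add hB.norm)
  have hM : ∀ t ∈ Icc 0 T, ‖A t‖ + ‖B t‖ ≤ C := fun t ht => (le_abs_self _).trans (hC t ht)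
  have hC0 : 0 ≤ C := (by positivity : 0 ≤ ‖A 0‖ + ‖B 0‖).trans (hM 0 ⟨le_rfl, hT⟩)
  exact existsUnique_isFixedPt_of_dist_iterate_le (by positivity : 0 ≤ C * T)
    (dist_delayPicard_iterate_le hτ hT hA hB hψ hC0 hM)

end Picard

section Solution

variable {n : ℕ} {τ T : ℝ} {A B : ℝ → (Fin n → ℝ) →L[ℝ] (Fin n → ℝ)} {ψ z y : ℝ → Fin n → ℝ}

theorem exists_unique_eq_delayField_Vop (hτ : 0 ≤ τ) (hT : 0 ≤ T)
    (hA : ContinuousOn A (Icc 0 T)) (hB : ContinuousOn B (Icc 0 T))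
    (hψ : ContinuousOn ψ (Icc (-τ) 0)) :
    ∃ z : ℝ → Fin n → ℝ, Continuous z ∧
      (∀ t ∈ Icc 0 T, z t = delayField A B τ (Vop n ψ z) t) ∧
      ∀ z' : ℝ → Fin n → ℝ, ContinuousOn z' (Icc 0 T) →
        (∀ t ∈ Icc 0 T, z' t = delayField A B τ (Vop n ψ z') t) → EqOn z' z (Icc 0 T) := by
  obtain ⟨u, hu, huniq⟩ := existsUnique_isFixedPt_delayPicard hτ hT hA hB hψ
  refine ⟨IccExtend hT u, u.continuous.Icc_extend', fun t ht => ?_, fun z' hz' hfix => ?_⟩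
  · rw [IccExtend_of_mem hT u ht]
    exact (DFunLike.congr_fun hu ⟨t, ht⟩).symm
  let u' : C(Icc 0 T, Fin n → ℝ) := ⟨(Icc 0 T).domRestrict z', hz'.domRestrict⟩
  have hext : EqOn (IccExtend hT u') z' (Icc 0 T) := fun t ht => IccExtend_of_mem hT u' ht
  have hu' : IsFixedPt (delayPicard hτ hT hA hB hψ) u' := by
    ext t : 1
    rw [delayPicard_apply, eqOn_delayField hτ (Vop_eqOn (by linarith) (eqOn_refl _ _) hext) t.2]
    exact (hfix t t.2).symm
  rw [huniq u' hu'] at hext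
  exact hext.symm

lemma Vop_eq_integral_delayField (hfix : ∀ t ∈ Icc 0 T, z t = delayField A B τ (Vop n ψ z) t)
    {t : ℝ} (ht : t ∈ Icc 0 T) :
    Vop n ψ z t = ψ 0 + ∫ s in (0:ℝ)..t, delayField A B τ (Vop n ψ z) s := by
  rw [Vop_of_nonneg ht.1]
  congr 1
  refine intervalIntegral.integral_congr fun s hs => hfix s ?_
  rw [uIcc_of_le ht.1] at hs
  exact ⟨hs.1, hs.2.trans ht.2⟩

lemma eqOn_Vop_delayField (hy₀ : ∀ t ∈ Icc (-τ) 0, y t = ψ t)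
    (hy : ∀ t ∈ Icc 0 T, y t = ψ 0 + ∫ s in (0:ℝ)..t, delayField A B τ y s) :
    EqOn (Vop n ψ (delayField A B τ y)) y (Icc (-τ) T) := by
  intro t ht
  rcases le_total t 0 with h | h
  · rw [Vop_of_nonpos h, hy₀ t ⟨ht.1, h⟩]
  · rw [Vop_of_nonneg h, hy t ⟨h, ht.2⟩]

end Solution

theorem stmt_6_general (n : ℕ) (τ T : ℝ) (hτ : 0 < τ) (hT : 0 < T)
    (A B : ℝ → ((Fin n → ℝ) →L[ℝ] (Fin n → ℝ))) (hA : Continuous A) (hB : Continuous B)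
    (ψ : ℝ → Fin n → ℝ) (hψ : ContinuousOn ψ (Set.Icc (-τ) 0)) :
    ∃ z : ℝ → Fin n → ℝ,
      -- z* is a continuous solution of the fixed point equation
      (ContinuousOn z (Set.Icc (0:ℝ) T) ∧
        (∀ t ∈ Set.Icc (0:ℝ) T,
          z t = A t (Vop n ψ z t) + B t (Vop n ψ z (t - τ)))) ∧
      -- z* is the unique such solution
      (∀ z' : ℝ → Fin n → ℝ,
        (ContinuousOn z' (Set.Icc (0:ℝ) T) ∧
          (∀ t ∈ Set.Icc (0:ℝ) T,
            z' t = A t (Vop n ψ z' t) + B t (Vop n ψ z' (t - τ)))) →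
        Set.EqOn z' z (Set.Icc (0:ℝ) T)) ∧
      -- y := V(ψ, z*) solves the integrated initial value problem
      (ContinuousOn (Vop n ψ z) (Set.Icc (-τ) T) ∧
        (∀ t ∈ Set.Icc (-τ) (0:ℝ), Vop n ψ z t = ψ t) ∧
        (∀ t ∈ Set.Icc (0:ℝ) T,
          Vop n ψ z t =
            ψ 0 + ∫ s in (0:ℝ)..t, (A s (Vop n ψ z s) + B s (Vop n ψ z (s - τ))))) ∧
      -- and it is the unique continuous solution of that problem
      (∀ y : ℝ → Fin n → ℝ,
        (ContinuousOn y (Set.Icc (-τ) T) ∧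
          (∀ t ∈ Set.Icc (-τ) (0:ℝ), y t = ψ t) ∧
          (∀ t ∈ Set.Icc (0:ℝ) T,
            y t = ψ 0 + ∫ s in (0:ℝ)..t, (A s (y s) + B s (y (s - τ))))) →
        Set.EqOn y (Vop n ψ z) (Set.Icc (-τ) T)) ∧
      -- z* is the derivative of y on (0, T)
      (∀ t ∈ Set.Ioo (0:ℝ) T, HasDerivAt (Vop n ψ z) (z t) t) := by
  obtain ⟨z, hz, hfix, huniq⟩ :=
    exists_unique_eq_delayField_Vop hτ.le hT.le hA.continuousOn hB.continuousOn hψ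
  refine ⟨z, ⟨hz.continuousOn, hfix⟩, fun z' h => huniq z' h.1 h.2,
    ⟨continuousOn_Vop hψ hz.continuousOn, fun t ht => Vop_of_nonpos ht.2,
      fun t ht => Vop_eq_integral_delayField hfix ht⟩, ?_,
    fun t ht => hasDerivAt_Vop hz.continuousOn ht⟩
  rintro y ⟨hyc, hy₀, hy⟩
  have hVy := eqOn_Vop_delayField (A := A) (B := B) hy₀ hy
  have hrhs : EqOn (delayField A B τ y) z (Icc 0 T) :=
    huniq _ (continuousOn_delayField hτ.le hA.continuousOn hB.continuousOn hyc)
      fun t ht => eqOn_delayField hτ.le hVy.symm ht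
  exact hVy.symm.trans (Vop_eqOn (by linarith) (eqOn_refl _ _) hrhs)

theorem stmt_6 (n : ℕ) (hn : 0 < n) (τ T : ℝ) (hτ : 0 < τ) (hT : 0 < T)
    (A B : ℝ → ((Fin n → ℝ) →L[ℝ] (Fin n → ℝ))) (hA : Continuous A) (hB : Continuous B)
    (ψ : ℝ → Fin n → ℝ) (hψ : ContinuousOn ψ (Set.Icc (-τ) 0)) :
    ∃ z : ℝ → Fin n → ℝ,
      -- z* is a continuous solution of the fixed point equation
      (ContinuousOn z (Set.Icc (0:ℝ) T) ∧
        (∀ t ∈ Set.Icc (0:ℝ) T,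
          z t = A t (Vop n ψ z t) + B t (Vop n ψ z (t - τ)))) ∧
      -- z* is the unique such solution
      (∀ z' : ℝ → Fin n → ℝ,
        (ContinuousOn z' (Set.Icc (0:ℝ) T) ∧
          (∀ t ∈ Set.Icc (0:ℝ) T,
            z' t = A t (Vop n ψ z' t) + B t (Vop n ψ z' (t - τ)))) →
        Set.EqOn z' z (Set.Icc (0:ℝ) T)) ∧
      -- y := V(ψ, z*) solves the integrated initial value problem
      (ContinuousOn (Vop n ψ z) (Set.Icc (-τ) T) ∧
        (∀ t ∈ Set.Icc (-τ) (0:ℝ), Vop n ψ z t = ψ t) ∧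
        (∀ t ∈ Set.Icc (0:ℝ) T,
          Vop n ψ z t =
            ψ 0 + ∫ s in (0:ℝ)..t, (A s (Vop n ψ z s) + B s (Vop n ψ z (s - τ))))) ∧
      -- and it is the unique continuous solution of that problem
      (∀ y : ℝ → Fin n → ℝ,
        (ContinuousOn y (Set.Icc (-τ) T) ∧
          (∀ t ∈ Set.Icc (-τ) (0:ℝ), y t = ψ t) ∧
          (∀ t ∈ Set.Icc (0:ℝ) T,
            y t = ψ 0 + ∫ s in (0:ℝ)..t, (A s (y s) + B s (y (s - τ))))) →
        Set.EqOn y (Vop n ψ z) (Set.Icc (-τ) T)) ∧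
      -- z* is the derivative of y on (0, T)
      (∀ t ∈ Set.Ioo (0:ℝ) T, HasDerivAt (Vop n ψ z) (z t) t) :=
  stmt_6_general n τ T hτ hT A B hA hB ψ hψ
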